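/- arXiv:1209.0082 — 7 statements merged into one kernel-verified Lean document; each statement's English description precedes it below -/
import Mathlib

section
/- The set of memory states that are part of some zero physical-weight cycle in the state diagram of a quantum convolutional encoder forms a subgroup of the Pauli group on m qubits: if M₁ and M₂ each belong to a zero physical-weight cycle, then so does M₁·M₂. -/
open scoped BigOperators

/-- The Pauli group on `j` qubits modulo its center, written additively:
an element `(a, b)` at each qubit corresponds to `X^a Z^b`. -/
abbrev Pauli (j : ℕ) := Fin j → (ZMod 2) × (ZMod 2)

/-- The standard symplectic form: two Pauli elements commute iff it vanishes. -/
def omega {j : ℕ} (v w : Pauli j) : ZMod 2 :=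
  ∑ i, ((v i).1 * (w i).2 + (w i).1 * (v i).2)

/-- A quantum convolutional encoder: a symplectic automorphism taking
(memory `m`, ancilla `s = n - k`, information `k`) to (physical `n`, memory `m`). -/
structure Encoder (m s k n : ℕ) where
  toEquiv : (Pauli m × Pauli s × Pauli k) ≃+ (Pauli n × Pauli m)
  symp : ∀ x y : Pauli m × Pauli s × Pauli k,
    omega (toEquiv x).1 (toEquiv y).1 + omega (toEquiv x).2 (toEquiv y).2
      = omega x.1 y.1 + omega x.2.1 y.2.1 + omega x.2.2 y.2.2

/-- `S ∈ {I, Z}^{⊗ s}`: the X-component vanishes. -/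
def isIZ {s : ℕ} (S : Pauli s) : Prop := ∀ i, (S i).1 = 0

/-- Pauli `Z` on the `i`-th qubit, identity elsewhere. -/
def Zi {s : ℕ} (i : Fin s) : Pauli s := fun j => (0, if j = i then 1 else 0)

/-- Pauli `X` on the `i`-th qubit, identity elsewhere. -/
def Xi {k : ℕ} (i : Fin k) : Pauli k := fun j => (if j = i then 1 else 0, 0)

/-- A standard path: at each step the ancilla input is in `{I,Z}^{⊗s}` and the
logical input is the identity. -/
def stdPath {m s k n : ℕ} (E : Encoder m s k n) (f : ℕ → Pauli m) : Prop :=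
  ∀ t, ∃ (S : Pauli s) (P : Pauli n), isIZ S ∧ E.toEquiv (f t, S, 0) = (P, f (t + 1))

/-- A finite-memory state: some standard path from it reaches the identity memory state. -/
def finiteMemory {m s k n : ℕ} (E : Encoder m s k n) (M : Pauli m) : Prop :=
  ∃ f : ℕ → Pauli m, stdPath E f ∧ f 0 = M ∧ ∃ t, f t = 0

/-- Membership in a zero physical-weight cycle. -/
def inZeroCycle {m s k n : ℕ} (E : Encoder m s k n) (M : Pauli m) : Prop :=
  ∃ (p : ℕ) (f : ℕ → Pauli m), 0 < p ∧ f 0 = M ∧ (∀ t, f (t + p) = f t) ∧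
    ∀ t, ∃ (S : Pauli s) (L : Pauli k), isIZ S ∧ E.toEquiv (f t, S, L) = (0, f (t + 1))

/-- Non-catastrophic: every edge of every zero physical-weight cycle has
identity logical label. -/
def nonCatastrophic {m s k n : ℕ} (E : Encoder m s k n) : Prop :=
  ∀ (p : ℕ) (f : ℕ → Pauli m) (S : ℕ → Pauli s) (L : ℕ → Pauli k),
    0 < p → (∀ t, f (t + p) = f t) →
    (∀ t, isIZ (S t) ∧ E.toEquiv (f t, S t, L t) = (0, f (t + 1))) →
    ∀ t, L t = 0

theorem zero_cycle_subgroup {m s k n : ℕ} (E : Encoder m s k n)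
    (M₁ M₂ : Pauli m) (h₁ : inZeroCycle E M₁) (h₂ : inZeroCycle E M₂) :
    inZeroCycle E (M₁ + M₂) := by
  obtain ⟨p₁, f₁, hp₁, h₁0, hper₁, hstep₁⟩ := h₁
  obtain ⟨p₂, f₂, hp₂, h₂0, hper₂, hstep₂⟩ := h₂
  refine ⟨p₁ * p₂, fun t => f₁ t + f₂ t, Nat.mul_pos hp₁ hp₂, by simp [h₁0, h₂0], ?_, ?_⟩
  · have per_mul : ∀ (f : ℕ → Pauli m) (p : ℕ), (∀ t, f (t + p) = f t) →
        ∀ q t, f (t + p * q) = f t := by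
      intro f p h q
      induction q with
      | zero => simp
      | succ q ih =>
        intro t
        rw [Nat.mul_succ, ← Nat.add_assoc, h, ih]
    intro t
    show f₁ (t + p₁ * p₂) + f₂ (t + p₁ * p₂) = f₁ t + f₂ t
    rw [per_mul f₁ p₁ hper₁ p₂ t, Nat.mul_comm, per_mul f₂ p₂ hper₂ p₁ t]
  · intro t
    obtain ⟨S₁, L₁, hS₁, hE₁⟩ := hstep₁ t
    obtain ⟨S₂, L₂, hS₂, hE₂⟩ := hstep₂ t
    refine ⟨S₁ + S₂, L₁ + L₂, fun i => ?_, ?_⟩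
    · have : ((S₁ + S₂) i).1 = (S₁ i).1 + (S₂ i).1 := rfl
      rw [this, hS₁ i, hS₂ i, add_zero]
    · have : ((f₁ t + f₂ t, S₁ + S₂, L₁ + L₂) : Pauli m × Pauli s × Pauli k)
          = (f₁ t, S₁, L₁) + (f₂ t, S₂, L₂) := rfl
      rw [this, map_add, hE₁, hE₂]
      ext <;> simp
end

section
/- The set of finite-memory states of a quantum convolutional encoder forms a subgroup of the Pauli group on m qubits: if there exist finite standard paths from M₁ and from M₂ to the identity memory state, then there exists a finite standard path from M₁·M₂ to the identity memory state. -/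
open scoped BigOperators

lemma stdPath_trunc {m s k n : ℕ} (E : Encoder m s k n) (f : ℕ → Pauli m)
    (hf : stdPath E f) (t1 : ℕ) (h : f t1 = 0) :
    stdPath E (fun t => if t ≤ t1 then f t else 0) := by
  intro t
  by_cases ht : t + 1 ≤ t1
  · obtain ⟨S, P, hS, hE⟩ := hf t
    exact ⟨S, P, hS, by simp [Nat.le_of_succ_le ht, ht, hE]⟩
  · refine ⟨0, 0, fun i => rfl, ?_⟩
    have h0 : (if t ≤ t1 then f t else 0) = 0 := by
      by_cases h' : t ≤ t1
      · have : t = t1 := le_antisymm h' (by omega)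
        simp [h', this, h]
      · simp [h']
    have h1 : (if t + 1 ≤ t1 then f (t + 1) else 0) = 0 := by simp [ht]
    simp only [h0, h1]
    have : ((0 : Pauli m), (0 : Pauli s), (0 : Pauli k)) = 0 := rfl
    rw [this, E.toEquiv.map_zero]
    rfl

lemma stdPath_add {m s k n : ℕ} (E : Encoder m s k n) (f g : ℕ → Pauli m)
    (hf : stdPath E f) (hg : stdPath E g) : stdPath E (f + g) := by
  intro t
  obtain ⟨S1, P1, hS1, hE1⟩ := hf t
  obtain ⟨S2, P2, hS2, hE2⟩ := hg t
  refine ⟨S1 + S2, P1 + P2, fun i => by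
    have := hS1 i; have := hS2 i
    simp_all [Prod.fst, Pi.add_apply], ?_⟩
  have : ((f t + g t : Pauli m), S1 + S2, (0 : Pauli k))
      = (f t, S1, (0 : Pauli k)) + (g t, S2, (0 : Pauli k)) := by
    simp [Prod.ext_iff]
  rw [Pi.add_apply, this, map_add, hE1, hE2]
  rfl

theorem finite_memory_subgroup {m s k n : ℕ} (E : Encoder m s k n)
    (M₁ M₂ : Pauli m) (h₁ : finiteMemory E M₁) (h₂ : finiteMemory E M₂) :
    finiteMemory E (M₁ + M₂) := by
  obtain ⟨f, hf, hf0, t1, hft⟩ := h₁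
  obtain ⟨g, hg, hg0, t2, hgt⟩ := h₂
  refine ⟨(fun t => if t ≤ t1 then f t else 0) + (fun t => if t ≤ t2 then g t else 0),
    stdPath_add E _ _ (stdPath_trunc E f hf t1 hft) (stdPath_trunc E g hg t2 hgt),
    by simp [hf0, hg0], max t1 t2 + 1, ?_⟩
  have h1 : ¬ (max t1 t2 + 1 ≤ t1) := by omega
  have h2 : ¬ (max t1 t2 + 1 ≤ t2) := by omega
  simp [h1, h2]
end

section
/- If M₀ is an infinite-memory state (no standard path from M₀ ever reaches the identity memory state) and M is a finite-memory state, then M₀·M is an infinite-memory state. -/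
open scoped BigOperators

open Filter

/-! Standard paths are closed under subtraction, since the encoder is additive and `{I,Z}^{⊗s}` is
a subgroup. A standard path that reaches the identity memory state can be continued by the identity
forever, so any two paths witnessing finite memory are eventually zero together and their difference
witnesses finite memory of the difference. Hence finite-memory states form a subgroup, and
`M₀ = (M₀ + M) - M` would be finite-memory if `M₀ + M` were. -/

namespace stdPath

variable {m s k n : ℕ} {E : Encoder m s k n} {f g : ℕ → Pauli m}

theorem sub (hf : stdPath E f) (hg : stdPath E g) : stdPath E (f - g) := by
  intro t
  obtain ⟨S₁, P₁, hS₁, hE₁⟩ := hf t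
  obtain ⟨S₂, P₂, hS₂, hE₂⟩ := hg t
  refine ⟨S₁ - S₂, P₁ - P₂, fun i => by simp [hS₁ i, hS₂ i], ?_⟩
  have hE : E.toEquiv ((f t, S₁, 0) - (g t, S₂, 0)) = (P₁, f (t + 1)) - (P₂, g (t + 1)) := by
    rw [E.toEquiv.map_sub, hE₁, hE₂]
  simpa only [Prod.mk_sub_mk, sub_zero, Pi.sub_apply] using hE

theorem truncate (hf : stdPath E f) {t₀ : ℕ} (ht₀ : f t₀ = 0) :
    stdPath E fun t => if t ≤ t₀ then f t else 0 := by
  intro t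
  by_cases ht : t + 1 ≤ t₀
  · obtain ⟨S, P, hS, hE⟩ := hf t
    exact ⟨S, P, hS, by simpa [ht, Nat.le_of_succ_le ht] using hE⟩
  · have hsrc : (if t ≤ t₀ then f t else 0) = 0 := by
      split_ifs with h
      · rw [show t = t₀ by omega, ht₀]
      · rfl
    refine ⟨0, 0, fun _ => rfl, ?_⟩
    dsimp only
    rw [hsrc, if_neg ht]
    exact E.toEquiv.map_zero

end stdPath

theorem finiteMemory_iff_eventually_zero {m s k n : ℕ} (E : Encoder m s k n) (M : Pauli m) :
    finiteMemory E M ↔ ∃ f : ℕ → Pauli m, stdPath E f ∧ f 0 = M ∧ ∀ᶠ t in atTop, f t = 0 := by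
  constructor
  · rintro ⟨f, hf, rfl, t₀, ht₀⟩
    refine ⟨_, hf.truncate ht₀, if_pos (Nat.zero_le _), eventually_atTop.2 ⟨t₀ + 1, ?_⟩⟩
    intro t ht
    exact if_neg (by omega)
  · rintro ⟨f, hf, hf0, hzero⟩
    exact ⟨f, hf, hf0, hzero.exists⟩

theorem finiteMemory.sub {m s k n : ℕ} {E : Encoder m s k n} {M M' : Pauli m}
    (h : finiteMemory E M) (h' : finiteMemory E M') : finiteMemory E (M - M') := by
  obtain ⟨f, hf, rfl, hf_zero⟩ := (finiteMemory_iff_eventually_zero E M).1 h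
  obtain ⟨g, hg, rfl, hg_zero⟩ := (finiteMemory_iff_eventually_zero E M').1 h'
  refine (finiteMemory_iff_eventually_zero E _).2 ⟨f - g, hf.sub hg, rfl, ?_⟩
  filter_upwards [hf_zero, hg_zero] with t hft hgt
  simp [hft, hgt]

theorem infinite_mul_finite_is_infinite {m s k n : ℕ} (E : Encoder m s k n)
    (M₀ M : Pauli m) (h₀ : ¬ finiteMemory E M₀) (h : finiteMemory E M) :
    ¬ finiteMemory E (M₀ + M) := fun hsum => h₀ (by simpa using hsum.sub h)
end

section
/- Every memory state appearing in a zero physical-weight cycle commutes with every finite-memory state. Equivalently, the zero physical-weight cycle subgroup P₀ is contained in the centralizer C(F₀) of the finite-memory subgroup F₀. -/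
open scoped BigOperators

lemma omega_zero_right {j : ℕ} (v : Pauli j) : omega v 0 = 0 := by
  simp [omega]

lemma omega_zero_left {j : ℕ} (v : Pauli j) : omega 0 v = 0 := by
  simp [omega]

lemma omega_isIZ {s : ℕ} {S S' : Pauli s} (h : isIZ S) (h' : isIZ S') :
    omega S S' = 0 := by
  have h1 : ∀ i, (S i).1 = 0 := h
  have h2 : ∀ i, (S' i).1 = 0 := h'
  simp [omega, h1, h2]

theorem zero_cycle_commutes_with_finite_memory {m s k n : ℕ} (E : Encoder m s k n)
    (M N : Pauli m) (hM : inZeroCycle E M) (hN : finiteMemory E N) :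
    omega M N = 0 := by
  obtain ⟨p, f, hp, hf0, hper, hstep⟩ := hM
  obtain ⟨g, hg, hg0, T, hgT⟩ := hN
  have key : ∀ t, omega (f t) (g t) = omega M N := by
    intro t
    induction t with
    | zero => rw [hf0, hg0]
    | succ t ih =>
      obtain ⟨S, L, hS, hE⟩ := hstep t
      obtain ⟨S', P, hS', hE'⟩ := hg t
      have h := E.symp (f t, S, L) (g t, S', 0)
      rw [hE, hE'] at h
      simp only [Prod.fst, Prod.snd] at h
      rw [omega_zero_left, omega_zero_right, omega_isIZ hS hS', zero_add, add_zero, add_zero] at h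
      rw [h, ih]
  have h := key T
  rw [hgT, omega_zero_right] at h
  exact h.symm
end

section
/- For any quantum convolutional encoder, every memory state g_{i,1} obtained as the memory output of the transition E(I^{⊗m} ⊗ Z(i) ⊗ I^{⊗k}) = h_{i,1} ⊗ g_{i,1} (a Pauli-Z on the i-th ancilla qubit input) is a finite-memory state, i.e., belongs to the finite-memory subgroup F₀. -/
open scoped BigOperators

theorem ancilla_Z_output_is_finite_memory {m s k n : ℕ} (E : Encoder m s k n)
    (i : Fin s) (h : Pauli n) (g : Pauli m)
    (hE : E.toEquiv (0, Zi i, 0) = (h, g)) :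
    finiteMemory E g := by
  classical
  have self0 : ∀ x : Pauli m, x + x = 0 := by
    intro x; funext j
    have h2 : ∀ z : ZMod 2, z + z = 0 := by decide
    show x j + x j = 0
    ext
    · exact h2 _
    · exact h2 _
  set T : Pauli m → Pauli m := fun M => (E.toEquiv (M, 0, 0)).2 with hT
  have hTadd : ∀ a b : Pauli m, T (a + b) = T a + T b := by
    intro a b
    have heq : ((a + b : Pauli m), (0 : Pauli s), (0 : Pauli k))
        = ((a, 0, 0) : Pauli m × Pauli s × Pauli k) + (b, 0, 0) := by
      simp [Prod.ext_iff]
    simp only [hT, heq, map_add]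
    rfl
  set u : ℕ → Pauli m := fun r => T^[r] g with hu
  have hu0 : u 0 = g := rfl
  have husucc : ∀ r, u (r + 1) = T (u r) := by
    intro r; simp [hu, Function.iterate_succ_apply']
  -- pigeonhole: exists a < b with u a = u b
  obtain ⟨a, b, hab, huab⟩ := Finite.exists_ne_map_eq_of_infinite u
  wlog hlt : a < b generalizing a b
  · exact this b a hab.symm huab.symm (by omega)
  set p : ℕ := b - a with hp
  have hppos : 0 < p := by omega
  have hper : u (a + p) = u a := by
    have : a + p = b := by omega
    rw [this]; exact huab.symm
  have hshift : ∀ r, u (a + r + p) = u (a + r) := by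
    intro r
    induction r with
    | zero => simpa using hper
    | succ r ih =>
        have e1 : a + (r + 1) + p = (a + r + p) + 1 := by omega
        have e2 : a + (r + 1) = (a + r) + 1 := by omega
        rw [e1, e2, husucc, husucc, ih]
  have hge : ∀ r, a ≤ r → u (r + p) = u r := by
    intro r hr
    have : r = a + (r - a) := by omega
    rw [this]; exact hshift _
  have hmul : ∀ l r, a ≤ r → u (r + l * p) = u r := by
    intro l
    induction l with
    | zero => intro r _; simp
    | succ l ih =>
        intro r hr
        have e : r + (l + 1) * p = (r + l * p) + p := by ring
        rw [e, hge _ (by omega), ih r hr]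
  set N : ℕ := (a + 1) * p with hN
  have hNge : a + 1 ≤ N := Nat.le_mul_of_pos_right _ hppos
  set f : ℕ → Pauli m := fun t => u t + (if N ≤ t then u (t - N) else 0) with hf
  refine ⟨f, ?_, ?_, ⟨N + a, ?_⟩⟩
  · intro t
    by_cases hcase : t + 1 = N
    · -- insert Zi i here
      refine ⟨Zi i, (E.toEquiv (f t, Zi i, 0)).1, ?_, ?_⟩
      · intro j; rfl
      · have hft : f t = u t := by
          simp only [hf]
          rw [if_neg (by omega)]
          simp
        have hsplit : ((f t, Zi i, 0) : Pauli m × Pauli s × Pauli k)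
            = (f t, 0, 0) + (0, Zi i, 0) := by simp [Prod.ext_iff]
        have hval : E.toEquiv (f t, Zi i, 0)
            = E.toEquiv (f t, 0, 0) + (h, g) := by
          rw [hsplit, map_add, hE]
        refine Prod.ext rfl ?_
        show (E.toEquiv (f t, Zi i, 0)).2 = f (t + 1)
        rw [hval]
        have : (E.toEquiv (f t, 0, 0)).2 = T (u t) := by rw [hft]
        show (E.toEquiv (f t, 0, 0)).2 + g = f (t + 1)
        rw [this, ← husucc, hcase]
        simp only [hf]
        rw [if_pos (le_refl N)]
        simp [hu0]
    · refine ⟨0, (E.toEquiv (f t, 0, 0)).1, fun j => rfl, ?_⟩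
      refine Prod.ext rfl ?_
      show T (f t) = f (t + 1)
      by_cases hle : N ≤ t
      · have hft : f t = u t + u (t - N) := by simp only [hf]; rw [if_pos hle]
        have hft1 : f (t + 1) = u (t + 1) + u (t + 1 - N) := by
          simp only [hf]; rw [if_pos (by omega)]
        have e : t + 1 - N = (t - N) + 1 := by omega
        rw [hft, hft1, hTadd, ← husucc, e, ← husucc]
      · have hft : f t = u t := by simp only [hf]; rw [if_neg hle]; simp
        have hft1 : f (t + 1) = u (t + 1) := by
          simp only [hf]; rw [if_neg (by omega)]; simp
        rw [hft, hft1, husucc]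
  · simp only [hf]
    rw [if_neg (by omega)]
    simp [hu0]
  · simp only [hf]
    rw [if_pos (by omega)]
    have e : N + a - N = a := by omega
    rw [e]
    have : u (N + a) = u a := by
      have e2 : N + a = a + (a + 1) * p := by omega
      rw [e2]; exact hmul _ _ (le_refl a)
    rw [this, self0]
end

section
/- If M is a memory state in the centralizer C(F₀) of the finite-memory subgroup, then there exist a unique memory state M' ∈ C(F₀), some S ∈ {I,Z}^{⊗(n-k)}, and some k-qubit Pauli L such that E(M ⊗ S ⊗ L) = I^{⊗n} ⊗ M'. -/
open scoped BigOperators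

/-!
Everything is linear algebra over `ZMod 2`. Let `F` be the finite-memory subspace and `A` the
space of inputs `(M, S, L)`, `S ∈ {I, Z}^{⊗ s}`, that `E` sends to some `(0, M')` with
`M' ∈ Fᗮ`. As `E` is an isometry and `{I, Z}^{⊗ s}` is Lagrangian, every element of `Aᗮ` is
`(0, S, 0) + x` with `E x ∈ Pauli n × F`; so a memory state orthogonal to the memory parts of
`A` takes a standard step into `F` and is itself in `F`. Taking orthogonals again, every
`M ∈ Fᗮ` is the memory part of an element of `A`.

Two successors of `M` differ by some `D ∈ Fᗮ` with `E (0, S, L) = (0, D)`. The isometry makes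
`D` orthogonal to the image of the memory transition `g`, and by Fitting's lemma
`F + im g` is everything (`ker gᵗ ⊆ F`), so `D = 0`.
-/

open LinearMap (BilinForm)

namespace LinearMap.BilinForm

section Prod

variable {R V W : Type*} [CommRing R] [AddCommGroup V] [Module R V] [AddCommGroup W] [Module R W]
  {B : BilinForm R V} {B' : BilinForm R W}

def prod (B : BilinForm R V) (B' : BilinForm R W) : BilinForm R (V × W) :=
  B.compl₁₂ (LinearMap.fst R V W) (LinearMap.fst R V W) +
    B'.compl₁₂ (LinearMap.snd R V W) (LinearMap.snd R V W)

@[simp]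
lemma prod_apply (x y : V × W) : B.prod B' x y = B x.1 y.1 + B' x.2 y.2 := rfl

lemma IsSymm.prod (hB : B.IsSymm) (hB' : B'.IsSymm) : (B.prod B').IsSymm :=
  ⟨fun x y => by rw [prod_apply, prod_apply, hB.eq, hB'.eq]⟩

lemma Nondegenerate.prod (hB : B.Nondegenerate) (hB' : B'.Nondegenerate) :
    (B.prod B').Nondegenerate :=
  ⟨fun x hx => Prod.ext (hB.1 _ fun y => by simpa using hx (y, 0))
      (hB'.1 _ fun y => by simpa using hx (0, y)),
    fun x hx => Prod.ext (hB.2 _ fun y => by simpa using hx (y, 0))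
      (hB'.2 _ fun y => by simpa using hx (0, y))⟩

lemma orthogonal_prod (A : Submodule R V) (C : Submodule R W) :
    (B.prod B').orthogonal (A.prod C) = (B.orthogonal A).prod (B'.orthogonal C) := by
  ext x
  simp only [mem_orthogonal_iff, Submodule.mem_prod, prod_apply]
  refine ⟨fun hx => ⟨fun a ha => ?_, fun c hc => ?_⟩, fun ⟨hA, hC⟩ y ⟨hy₁, hy₂⟩ => ?_⟩
  · simpa using hx (a, 0) ⟨ha, C.zero_mem⟩
  · simpa using hx (0, c) ⟨A.zero_mem, hc⟩
  · rw [hA _ hy₁, hC _ hy₂, add_zero]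

end Prod

section

variable {R V V' : Type*} [CommRing R] [AddCommGroup V] [Module R V] [AddCommGroup V']
  [Module R V'] {B : BilinForm R V} {B' : BilinForm R V'}

lemma orthogonal_sup (A C : Submodule R V) :
    B.orthogonal (A ⊔ C) = B.orthogonal A ⊓ B.orthogonal C := by
  refine le_antisymm (le_inf (orthogonal_le le_sup_left) (orthogonal_le le_sup_right)) ?_
  rintro x ⟨hA, hC⟩ y hy
  obtain ⟨a, ha, c, hc, rfl⟩ := Submodule.mem_sup.1 hy
  rw [map_add, LinearMap.add_apply, hA a ha, hC c hc, add_zero]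

lemma orthogonal_comap_of_isometry (e : V ≃ₗ[R] V') (he : ∀ x y, B' (e x) (e y) = B x y)
    (Y : Submodule R V') :
    B.orthogonal (Y.comap e.toLinearMap) = (B'.orthogonal Y).comap e.toLinearMap := by
  ext x
  simp only [mem_orthogonal_iff, Submodule.mem_comap, LinearEquiv.coe_coe]
  refine ⟨fun hx y hy => ?_, fun hx y hy => ?_⟩
  · simpa [← he] using hx (e.symm y) (by simpa using hy)
  · rw [← he]; exact hx _ hy

end

lemma orthogonal_inf {K V : Type*} [Field K] [AddCommGroup V] [Module K V] [FiniteDimensional K V]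
    {B : BilinForm K V} (hB : B.Nondegenerate) (hB₀ : B.IsRefl) (A C : Submodule K V) :
    B.orthogonal (A ⊓ C) = B.orthogonal A ⊔ B.orthogonal C := by
  rw [← orthogonal_orthogonal hB hB₀ (_ ⊔ _), orthogonal_sup, orthogonal_orthogonal hB hB₀,
    orthogonal_orthogonal hB hB₀]

end LinearMap.BilinForm

section Pauli

open LinearMap.BilinForm

def symplecticForm (j : ℕ) : BilinForm (ZMod 2) (Pauli j) :=
  LinearMap.mk₂ (ZMod 2) omega
    (fun x y z => by simp only [omega, ← Finset.sum_add_distrib]; congr! 1; simp; ring)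
    (fun c x y => by simp only [omega, smul_eq_mul, Finset.mul_sum]; congr! 1; simp; ring)
    (fun x y z => by simp only [omega, ← Finset.sum_add_distrib]; congr! 1; simp; ring)
    (fun c x y => by simp only [omega, smul_eq_mul, Finset.mul_sum]; congr! 1; simp; ring)

@[simp]
lemma symplecticForm_apply {j : ℕ} (v w : Pauli j) : symplecticForm j v w = omega v w := rfl

lemma omega_comm {j : ℕ} (v w : Pauli j) : omega v w = omega w v :=
  Finset.sum_congr rfl fun _ _ => add_comm _ _

lemma symplecticForm_isSymm (j : ℕ) : (symplecticForm j).IsSymm :=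
  ⟨omega_comm⟩

lemma omega_Zi {j : ℕ} (v : Pauli j) (i : Fin j) : omega v (Zi i) = (v i).1 := by
  simp [omega, Zi]

lemma omega_Xi {j : ℕ} (v : Pauli j) (i : Fin j) : omega v (Xi i) = (v i).2 := by
  simp [omega, Xi]

lemma symplecticForm_nondegenerate (j : ℕ) : (symplecticForm j).Nondegenerate := by
  refine (symplecticForm_isSymm j).isRefl.nondegenerate_iff_separatingLeft.2 fun v hv => ?_
  funext i
  exact Prod.ext (by simpa [omega_Zi] using hv (Zi i)) (by simpa [omega_Xi] using hv (Xi i))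

def isIZSubmodule (s : ℕ) : Submodule (ZMod 2) (Pauli s) where
  carrier := {S | isIZ S}
  add_mem' ha hb i := by simp [ha i, hb i]
  zero_mem' _ := rfl
  smul_mem' c x hx i := by simp [hx i]

lemma mem_isIZSubmodule {s : ℕ} {S : Pauli s} : S ∈ isIZSubmodule s ↔ isIZ S := Iff.rfl

lemma orthogonal_isIZSubmodule (s : ℕ) :
    (symplecticForm s).orthogonal (isIZSubmodule s) = isIZSubmodule s := by
  ext S
  simp only [mem_orthogonal_iff, mem_isIZSubmodule, symplecticForm_apply]
  refine ⟨fun hS i => ?_, fun hS T hT => ?_⟩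
  · simpa [omega_comm (Zi i), omega_Zi] using hS (Zi i) fun _ => rfl
  · exact Finset.sum_eq_zero fun i _ => by simp [hS i, hT i]

end Pauli

namespace Encoder

open LinearMap.BilinForm

variable {m s k n : ℕ} (E : Encoder m s k n)

def toLinearEquiv : (Pauli m × Pauli s × Pauli k) ≃ₗ[ZMod 2] (Pauli n × Pauli m) :=
  { E.toEquiv with map_smul' := ZMod.map_smul E.toEquiv.toAddMonoidHom }

@[simp]
lemma toLinearEquiv_apply (x : Pauli m × Pauli s × Pauli k) :
    E.toLinearEquiv x = E.toEquiv x := rfl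

lemma isometry (x y : Pauli m × Pauli s × Pauli k) :
    ((symplecticForm n).prod (symplecticForm m)) (E.toLinearEquiv x) (E.toLinearEquiv y) =
      ((symplecticForm m).prod ((symplecticForm s).prod (symplecticForm k))) x y := by
  simp only [prod_apply, symplecticForm_apply, toLinearEquiv_apply, E.symp, add_assoc]

def memoryMap : Pauli m →ₗ[ZMod 2] Pauli m :=
  LinearMap.snd (ZMod 2) (Pauli n) (Pauli m) ∘ₗ E.toLinearEquiv.toLinearMap ∘ₗ
    LinearMap.inl (ZMod 2) (Pauli m) (Pauli s × Pauli k)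

lemma memoryMap_apply (A : Pauli m) : E.memoryMap A = (E.toEquiv (A, 0, 0)).2 := rfl

end Encoder

section FiniteMemory

variable {m s k n : ℕ} {E : Encoder m s k n}

lemma stdPath_zero (E : Encoder m s k n) : stdPath E 0 :=
  fun _ => ⟨0, 0, fun _ => rfl, E.toEquiv.map_zero⟩

lemma stdPath.add {f g : ℕ → Pauli m} (hf : stdPath E f) (hg : stdPath E g) :
    stdPath E (f + g) := by
  intro t
  obtain ⟨S, P, hS, hP⟩ := hf t
  obtain ⟨S', P', hS', hP'⟩ := hg t
  refine ⟨S + S', P + P', (isIZSubmodule s).add_mem hS hS', ?_⟩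
  simpa [hP, hP'] using E.toEquiv.map_add (f t, S, 0) (g t, S', 0)

lemma finiteMemory.exists_stdPath_eventually_zero {M : Pauli m} (hM : finiteMemory E M) :
    ∃ f, stdPath E f ∧ f 0 = M ∧ ∀ᶠ t in Filter.atTop, f t = 0 := by
  obtain ⟨f, hf, rfl, T, hT⟩ := hM
  refine ⟨fun t => if t < T then f t else 0, fun t => ?_, ?_, Filter.eventually_atTop.2 ⟨T, ?_⟩⟩
  · by_cases ht : t + 1 < T
    · simpa [ht, show t < T by omega] using hf t
    by_cases ht' : t < T
    · simpa [ht, ht', show t + 1 = T by omega, hT] using hf t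
    · simpa [ht, ht'] using stdPath_zero E t
  · rcases Nat.eq_zero_or_pos T with rfl | hT0
    · simpa using hT.symm
    · simp [hT0]
  · intro t ht
    simp [show ¬t < T by omega]

lemma finiteMemory_of_step {A : Pauli m} {S : Pauli s} (hS : isIZ S)
    (hN : finiteMemory E (E.toEquiv (A, S, 0)).2) : finiteMemory E A := by
  obtain ⟨f, hf, hf0, T, hT⟩ := hN
  refine ⟨fun t => Nat.casesOn t A f, fun t => ?_, rfl, T + 1, hT⟩
  cases t with
  | zero => exact ⟨S, _, hS, Prod.ext rfl hf0.symm⟩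
  | succ t => exact hf t

variable (E) in
def finiteMemorySubmodule : Submodule (ZMod 2) (Pauli m) where
  carrier := {M | finiteMemory E M}
  zero_mem' := ⟨0, stdPath_zero E, rfl, 0, rfl⟩
  add_mem' := by
    rintro a b ha hb
    obtain ⟨f, hf, rfl, hf0⟩ := ha.exists_stdPath_eventually_zero
    obtain ⟨g, hg, rfl, hg0⟩ := hb.exists_stdPath_eventually_zero
    obtain ⟨T, hT⟩ := (hf0.and hg0).exists
    exact ⟨f + g, hf.add hg, rfl, T, by simp [hT.1, hT.2]⟩
  smul_mem' c x hx := by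
    obtain rfl | rfl : c = 0 ∨ c = 1 := by revert c; decide
    · rw [zero_smul]
      exact ⟨0, stdPath_zero E, rfl, 0, rfl⟩
    · rwa [one_smul]

lemma mem_finiteMemorySubmodule {M : Pauli m} :
    M ∈ finiteMemorySubmodule E ↔ finiteMemory E M := Iff.rfl

lemma ker_memoryMap_pow_le (t : ℕ) :
    LinearMap.ker (E.memoryMap ^ t) ≤ finiteMemorySubmodule E := by
  intro x hx
  refine ⟨fun u => (E.memoryMap ^ u) x,
    fun u => ⟨0, (E.toEquiv ((E.memoryMap ^ u) x, 0, 0)).1, fun _ => rfl, ?_⟩, by simp, t, hx⟩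
  dsimp only
  rw [pow_succ', Module.End.mul_apply, Encoder.memoryMap_apply]

lemma finiteMemorySubmodule_sup_range_memoryMap :
    finiteMemorySubmodule E ⊔ LinearMap.range E.memoryMap = ⊤ := by
  obtain ⟨t, ht⟩ := E.memoryMap.eventually_isCompl_ker_pow_range_pow.exists_forall_of_atTop
  refine eq_top_iff.2 ((ht (t + 1) (by omega)).sup_eq_top.symm.le.trans
    (sup_le_sup (ker_memoryMap_pow_le _) ?_))
  rw [pow_succ']
  exact LinearMap.range_comp_le_range _ _

end FiniteMemory

section Centralizer

open LinearMap.BilinForm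

variable {m s k n : ℕ} (E : Encoder m s k n)

lemma mem_orthogonal_finiteMemorySubmodule_iff {M : Pauli m} :
    M ∈ (symplecticForm m).orthogonal (finiteMemorySubmodule E) ↔
      ∀ N : Pauli m, finiteMemory E N → omega M N = 0 := by
  simp only [mem_orthogonal_iff, mem_finiteMemorySubmodule, symplecticForm_apply, omega_comm M]

lemma exists_zero_output_step_of_mem_orthogonal {M : Pauli m}
    (hM : M ∈ (symplecticForm m).orthogonal (finiteMemorySubmodule E)) :
    ∃ (S : Pauli s) (L : Pauli k) (M' : Pauli m), isIZ S ∧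
      M' ∈ (symplecticForm m).orthogonal (finiteMemorySubmodule E) ∧
      E.toEquiv (M, S, L) = (0, M') := by
  set F := finiteMemorySubmodule E
  set A : Submodule (ZMod 2) (Pauli m × Pauli s × Pauli k) :=
    (⊤ : Submodule (ZMod 2) (Pauli m)).prod ((isIZSubmodule s).prod ⊤) ⊓
      (Submodule.prod ⊥ ((symplecticForm m).orthogonal F)).comap E.toLinearEquiv.toLinearMap
  suffices hA : M ∈ A.map (LinearMap.fst _ _ _) by
    obtain ⟨⟨M, S, L⟩, ⟨⟨-, hS, -⟩, hE⟩, rfl⟩ := hA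
    exact ⟨S, L, _, hS, hE.2, Prod.ext hE.1 rfl⟩
  have hsymm := symplecticForm_isSymm
  have hnd := symplecticForm_nondegenerate
  have key : (symplecticForm m).orthogonal (A.map (LinearMap.fst _ _ _)) ≤ F := by
    intro N hN
    have hN' : (N, 0, 0) ∈
        ((symplecticForm m).prod ((symplecticForm s).prod (symplecticForm k))).orthogonal A :=
      fun a ha => by
        simpa only [prod_apply, map_zero, add_zero] using hN a.1 (Submodule.mem_map_of_mem ha)
    -- `Aᗮ = 0 × IZ × 0 + E⁻¹ (Pauli n × F)`, so `N` takes a standard step into `F`.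
    rw [orthogonal_inf ((hnd m).prod ((hnd s).prod (hnd k)))
        ((hsymm m).prod ((hsymm s).prod (hsymm k))).isRefl,
      orthogonal_comap_of_isometry _ E.isometry, orthogonal_prod, orthogonal_prod,
      orthogonal_prod, orthogonal_top_eq_bot (hnd m),
      orthogonal_top_eq_bot (hnd k), orthogonal_isIZSubmodule, orthogonal_bot,
      orthogonal_orthogonal (hnd m) (hsymm m).isRefl] at hN'
    obtain ⟨y, ⟨hy₁, hy₂, hy₃⟩, x, ⟨-, hx⟩, hyx⟩ := Submodule.mem_sup.1 hN'
    obtain rfl : x = (N, -y.2.1, 0) := by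
      rw [eq_sub_of_add_eq' hyx]
      ext <;> simp_all
    exact finiteMemory_of_step (neg_mem hy₂) hx
  rw [← orthogonal_orthogonal (hnd m) (hsymm m).isRefl (A.map _)]
  exact orthogonal_le key hM

lemma eq_zero_of_zero_output_step {S : Pauli s} {L : Pauli k} {D : Pauli m}
    (hE : E.toEquiv (0, S, L) = (0, D))
    (hD : D ∈ (symplecticForm m).orthogonal (finiteMemorySubmodule E)) : D = 0 := by
  refine (symplecticForm_nondegenerate m).2 D fun w => ?_
  obtain ⟨N, hN, _, ⟨A, rfl⟩, rfl⟩ := Submodule.mem_sup.1 <|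
    (finiteMemorySubmodule_sup_range_memoryMap (E := E)).ge (Submodule.mem_top (x := w))
  have hA : symplecticForm m (E.memoryMap A) D = 0 := by
    simpa only [Encoder.memoryMap_apply, prod_apply, Encoder.toLinearEquiv_apply, hE, map_zero,
      LinearMap.zero_apply, zero_add, add_zero] using E.isometry (A, 0, 0) (0, S, L)
  rw [map_add, LinearMap.add_apply, hD N hN, hA, add_zero]

end Centralizer

theorem successor_of_centralizer_state {m s k n : ℕ} (E : Encoder m s k n)
    (M : Pauli m) (hM : ∀ N : Pauli m, finiteMemory E N → omega M N = 0) :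
    ∃! M' : Pauli m, (∀ N : Pauli m, finiteMemory E N → omega M' N = 0) ∧
      ∃ (S : Pauli s) (L : Pauli k), isIZ S ∧
        E.toEquiv (M, S, L) = (0, M') := by
  obtain ⟨S, L, M', hS, hM', hE⟩ :=
    exists_zero_output_step_of_mem_orthogonal E ((mem_orthogonal_finiteMemorySubmodule_iff E).2 hM)
  refine ⟨M', ⟨(mem_orthogonal_finiteMemorySubmodule_iff E).1 hM', S, L, hS, hE⟩, ?_⟩
  rintro M'' ⟨hM'', S', L', -, hE'⟩
  have hdiff : E.toEquiv (0, S' - S, L' - L) = (0, M'' - M') := by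
    simpa [hE, hE'] using E.toEquiv.map_sub (M, S', L') (M, S, L)
  exact sub_eq_zero.1 (eq_zero_of_zero_output_step E hdiff
    (sub_mem ((mem_orthogonal_finiteMemorySubmodule_iff E).2 hM'') hM'))
end

section
/- If g_{i,1} is the memory output of E(I^{⊗m} ⊗ Z(i) ⊗ I^{⊗k}) and the standard path from g_{i,1} with all-identity inputs enters a cycle g_{i,j} → g_{i,j+1} → … → g_{i,t} → g_{i,j}, then the memory state g_{i,t-j+1}·g_{i,1} can be continued by identity inputs to reach g_{i,j}·g_{i,j} = I^{⊗m}; consequently in the Pauli group mod phases (where every element is an involution) the state g_{i,1} is a finite-memory state. -/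
open scoped BigOperators

theorem cycle_implies_finite_memory {m s k n : ℕ} (E : Encoder m s k n)
    (i : Fin s) (h1 : Pauli n) (g1 : Pauli m)
    (hE : E.toEquiv (0, Zi i, 0) = (h1, g1))
    (f : ℕ → Pauli m) (hf0 : f 0 = g1)
    (hstep : ∀ t, ∃ P : Pauli n, E.toEquiv (f t, 0, 0) = (P, f (t + 1)))
    (j t : ℕ) (hjt : j ≤ t) (hcycle : f (t + 1) = f j) :
    finiteMemory E g1 := by
  classical
  have h2 : ∀ a : ZMod 2, a + a = 0 := by decide
  have hself : ∀ v : Pauli m, v + v = 0 := fun v => by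
    funext x; exact Prod.ext (h2 _) (h2 _)
  set q := t - j with hq
  refine ⟨fun r => if r ≤ q then f r else f r + f (r - (q + 1)), ?_, by simp [hf0], ⟨t + 1, ?_⟩⟩
  · intro r
    by_cases hr : r ≤ q
    · by_cases hr' : r + 1 ≤ q
      · obtain ⟨P, hP⟩ := hstep r
        exact ⟨0, P, fun i => rfl, by simp only [if_pos hr, if_pos hr']; exact hP⟩
      · have hrq : r = q := by omega
        obtain ⟨P, hP⟩ := hstep r
        refine ⟨Zi i, P + h1, fun i' => rfl, ?_⟩
        have hadd : E.toEquiv (f r, Zi i, 0) = (P + h1, f (r + 1) + g1) := by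
          have : ((f r, Zi i, 0) : Pauli m × Pauli s × Pauli k)
              = (f r, 0, 0) + (0, Zi i, 0) := by
            simp [Prod.ext_iff]
          rw [this, map_add, hP, hE, Prod.mk_add_mk]
        have h1' : r + 1 - (q + 1) = 0 := by omega
        simp only [hr, if_pos, hr', if_neg, h1', hf0]
        exact hadd
    · obtain ⟨P, hP⟩ := hstep r
      obtain ⟨P', hP'⟩ := hstep (r - (q + 1))
      refine ⟨0, P + P', fun i' => rfl, ?_⟩
      have hsub : r - (q + 1) + 1 = r + 1 - (q + 1) := by omega
      have hr' : ¬ (r + 1 ≤ q) := by omega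
      have : E.toEquiv (f r + f (r - (q + 1)), 0, 0)
          = (P + P', f (r + 1) + f (r + 1 - (q + 1))) := by
        have heq : ((f r + f (r - (q + 1)), (0 : Pauli s), (0 : Pauli k)))
            = (f r, 0, 0) + (f (r - (q + 1)), 0, 0) := by
          simp [Prod.ext_iff]
        rw [heq, map_add, hP, hP', Prod.mk_add_mk, hsub]
      simp only [hr, if_neg, hr']
      exact this
  · have h1' : ¬ (t + 1 ≤ q) := by omega
    have h2' : t + 1 - (q + 1) = j := by omega
    simp only [if_neg h1', h2', hcycle]; exact hself _
end
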